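/- arXiv:2010.14636 — 4 statements merged into one kernel-verified Lean document; each statement's English description precedes it below -/
import Mathlib

section
/- As operators on partitions, d_{i+1} ∘ u_{i+1} = u_i ∘ d_i for every i ∈ N. That is, for every partition λ, removing a box from column i+1 after adding a box to column i+1 (with the convention that an impossible step gives 0) yields the same result as adding a box to column i after removing a box from column i. -/
/-- Alphabet Γ = ℕ ∪ ℕ̄ : a letter is `(false, i)` for unbarred `i` (up-operator)
and `(true, i)` for barred `ī` (down-operator); indices of interest are `i ≥ 1`. -/
abbrev Γ : Type := Bool × ℕ

/-- `c : ℕ → ℕ` records the column lengths `λ'_i` (for `i ≥ 1`) of a partition: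
nonincreasing, eventually zero; `c 0 = 0` is a normalization. -/
def IsPartition (c : ℕ → ℕ) : Prop :=
  (∀ i, 1 ≤ i → c (i + 1) ≤ c i) ∧ c 0 = 0 ∧ ∃ N, ∀ i, N ≤ i → c i = 0

open scoped Classical in
/-- The up-operator `u_i`: add a box to column `i` if the result is a partition, else `0` (`none`). -/
noncomputable def upFun (i : ℕ) (c : ℕ → ℕ) : Option (ℕ → ℕ) :=
  if 1 ≤ i ∧ IsPartition (Function.update c i (c i + 1)) then
    some (Function.update c i (c i + 1)) else none

open scoped Classical in
/-- The down-operator `d_i`: remove a box from column `i` if the result is a partition, else `0`. -/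
noncomputable def downFun (i : ℕ) (c : ℕ → ℕ) : Option (ℕ → ℕ) :=
  if 1 ≤ i ∧ 1 ≤ c i ∧ IsPartition (Function.update c i (c i - 1)) then
    some (Function.update c i (c i - 1)) else none

/-- `u_i` extended to `0` (operators applied to `0` give `0`). -/
noncomputable def U (i : ℕ) (o : Option (ℕ → ℕ)) : Option (ℕ → ℕ) := o.bind (upFun i)

/-- `d_i` extended to `0`. -/
noncomputable def D (i : ℕ) (o : Option (ℕ → ℕ)) : Option (ℕ → ℕ) := o.bind (downFun i)

/-- The action `u_x` of a word `x` on (possibly zero) partitions, rightmost letter acting first. -/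
noncomputable def act (x : List Γ) (o : Option (ℕ → ℕ)) : Option (ℕ → ℕ) :=
  x.foldr (fun l o => if l.1 then D l.2 o else U l.2 o) o

/-- The weight `w_j(x)`: occurrences of `j` minus occurrences of `j̄` in `x`. -/
def wt (j : ℕ) (x : List Γ) : ℤ :=
  (x.count ((false, j) : Γ) : ℤ) - (x.count ((true, j) : Γ) : ℤ)

/-- `α_i(x)`: the maximum of `w_{i+1}(x̃) - w_i(x̃)` over all suffix subwords `x̃` of `x`
(including the empty suffix, which contributes `0`). -/
def alphaV (i : ℕ) (x : List Γ) : ℤ :=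
  (x.tails.map (fun s => wt (i + 1) s - wt i s)).foldr max 0

/-!
For a partition with column lengths `c` and `i ≥ 1`, both `u_{i+1}` and `d_i` are defined exactly
when `c (i + 1) < c i`. In that case `d_{i+1} u_{i+1}` and `u_i d_i` each undo the box they just
moved and return `c`; otherwise `c (i + 1) = c i` and both sides are `0`.
-/

open Function

section ColumnUpdate

variable {c : ℕ → ℕ} {i j : ℕ}

/-- Index `0` is the normalisation `c 0 = 0`, not a column, so column `1` has no left neighbour. -/
theorem isPartition_update_iff (hc : IsPartition c) (hj : 1 ≤ j) (v : ℕ) :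
    IsPartition (update c j v) ↔ (2 ≤ j → v ≤ c (j - 1)) ∧ c (j + 1) ≤ v := by
  obtain ⟨hmono, h0, N, hN⟩ := hc
  constructor
  · rintro ⟨hmono', -, -⟩
    refine ⟨fun hj2 => ?_, ?_⟩
    · have := hmono' (j - 1) (by omega)
      rwa [Nat.sub_add_cancel hj, update_self, update_of_ne (by omega)] at this
    · have := hmono' j hj
      rwa [update_self, update_of_ne (by omega)] at this
  · rintro ⟨hprev, hnext⟩
    refine ⟨fun k hk => ?_, by rwa [update_of_ne (by omega)], max N (j + 1), fun k hk => ?_⟩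
    · rcases eq_or_ne k j with rfl | hkj
      · rwa [update_self, update_of_ne (by omega)]
      rcases eq_or_ne (k + 1) j with rfl | hkj'
      · rw [update_self, update_of_ne hkj]
        simpa using hprev (by omega)
      · rw [update_of_ne hkj, update_of_ne hkj']
        exact hmono k hk
    · rw [update_of_ne (by omega)]
      exact hN k (by omega)

theorem upFun_succ_of_lt (hc : IsPartition c) (hi : 1 ≤ i) (h : c (i + 1) < c i) :
    upFun (i + 1) c = some (update c (i + 1) (c (i + 1) + 1)) := by
  have := hc.1 (i + 1) (by omega)
  rw [upFun, if_pos ⟨by omega, (isPartition_update_iff hc (by omega) _).2 ⟨fun _ => h, by omega⟩⟩]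

theorem upFun_succ_of_eq (hc : IsPartition c) (hi : 1 ≤ i) (h : c (i + 1) = c i) :
    upFun (i + 1) c = none := by
  rw [upFun, if_neg]
  rintro ⟨-, hup⟩
  have := ((isPartition_update_iff hc (by omega) _).1 hup).1 (by omega)
  rw [Nat.add_sub_cancel] at this
  omega

theorem downFun_of_lt (hc : IsPartition c) (hi : 1 ≤ i) (h : c (i + 1) < c i) :
    downFun i c = some (update c i (c i - 1)) := by
  have hprev (hi2 : 2 ≤ i) : c i ≤ c (i - 1) := by
    simpa [Nat.sub_add_cancel (by omega : 1 ≤ i)] using hc.1 (i - 1) (by omega)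
  rw [downFun, if_pos ⟨hi, by omega, (isPartition_update_iff hc hi _).2
    ⟨fun hi2 => (Nat.sub_le _ _).trans (hprev hi2), by omega⟩⟩]

theorem downFun_of_eq (hc : IsPartition c) (hi : 1 ≤ i) (h : c (i + 1) = c i) :
    downFun i c = none := by
  rw [downFun, if_neg]
  rintro ⟨-, hpos, hdown⟩
  have := ((isPartition_update_iff hc hi _).1 hdown).2
  omega

theorem downFun_update_add_one (hc : IsPartition c) (hj : 1 ≤ j) :
    downFun j (update c j (c j + 1)) = some c := by
  rw [downFun, if_pos] <;> simp [hj, hc]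

theorem upFun_update_sub_one (hc : IsPartition c) (hj : 1 ≤ j) (hpos : 1 ≤ c j) :
    upFun j (update c j (c j - 1)) = some c := by
  rw [upFun, if_pos] <;> simp [hj, hc, Nat.sub_add_cancel hpos]

end ColumnUpdate

theorem down_up_succ (i : ℕ) (hi : 1 ≤ i) (c : ℕ → ℕ) (hc : IsPartition c) :
    D (i + 1) (U (i + 1) (some c)) = U i (D i (some c)) := by
  simp only [U, D, Option.bind_some]
  rcases (hc.1 i hi).lt_or_eq with h | h
  · rw [upFun_succ_of_lt hc hi h, downFun_of_lt hc hi h, Option.bind_some, Option.bind_some,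
      downFun_update_add_one hc (by omega), upFun_update_sub_one hc hi (by omega)]
  · rw [upFun_succ_of_eq hc hi h, downFun_of_eq hc hi h]
    rfl
end

section
/- As operators on partitions, u_{i+1} u_{i+2} u_{i+1} u_i = u_{i+1} u_{i+2} u_i u_{i+1} for every i ∈ N. -/
/-! Column `j` of a partition can grow iff `j = 1` or `λ'_j < λ'_{j-1}`, and then `u_j` adds
`e_j`. Both words add `e_i + 2 e_{i+1} + e_{i+2}`, and both are nonzero exactly when `u_i` and
`u_{i+1}` can act on `λ`. The `u_{i+2}` steps and the first `u_{i+1}` after `u_i` always succeed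
by monotonicity of `λ'`; on the left the last `u_{i+1}` needs `λ'_{i+1} < λ'_i` again, on the
right `u_i` acting after `u_{i+1}` sees the same columns `i - 1, i` as on `λ`. -/

lemma update_add_one_eq_add_single (c : ℕ → ℕ) (j : ℕ) :
    Function.update c j (c j + 1) = c + Pi.single j 1 := by
  ext k
  rcases eq_or_ne k j with rfl | hk <;> simp [*]

namespace IsPartition

variable {c : ℕ → ℕ} {j : ℕ}

lemma add_single (hc : IsPartition c) (hj : 1 ≤ j) (h : j = 1 ∨ c j < c (j - 1)) :
    IsPartition (c + Pi.single j 1) := by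
  obtain ⟨hmono, h0, N, hN⟩ := hc
  refine ⟨fun k hk => ?_, ?_, max N (j + 1), fun k hk => ?_⟩ <;> grind [Pi.add_apply]

end IsPartition

section

variable {c : ℕ → ℕ} {i j : ℕ}

lemma U_some_of_lt (hc : IsPartition c) (hj : 1 ≤ j) (h : j = 1 ∨ c j < c (j - 1)) :
    U j (some c) = some (c + Pi.single j 1) ∧ IsPartition (c + Pi.single j 1) := by
  have hc' := hc.add_single hj h
  rw [U, Option.bind_some, upFun, update_add_one_eq_add_single, if_pos ⟨hj, hc'⟩]
  exact ⟨rfl, hc'⟩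

lemma U_some_of_le (hj : 2 ≤ j) (h : c (j - 1) ≤ c j) : U j (some c) = none := by
  rw [U, Option.bind_some, upFun, if_neg]
  rintro ⟨-, hmono, -⟩
  have := hmono (j - 1) (by omega)
  rw [Nat.sub_add_cancel (by omega), Function.update_self, Function.update_of_ne (by omega)] at this
  omega

lemma U_succ_U_add_two_U_succ_U_some (hc : IsPartition c) (hi : 1 ≤ i) :
    U (i + 1) (U (i + 2) (U (i + 1) (U i (some c)))) =
      if (i = 1 ∨ c i < c (i - 1)) ∧ c (i + 1) < c i then
        some (c + Pi.single i 1 + Pi.single (i + 1) 1 + Pi.single (i + 2) 1 + Pi.single (i + 1) 1)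
      else none := by
  have hci : c (i + 1) ≤ c i := hc.1 i hi
  have hci' : c (i + 2) ≤ c (i + 1) := hc.1 (i + 1) (by omega)
  by_cases hP : i = 1 ∨ c i < c (i - 1)
  · obtain ⟨e1, h1⟩ := U_some_of_lt hc hi hP
    obtain ⟨e2, h2⟩ := U_some_of_lt h1 (j := i + 1) (by omega) (by grind [Pi.add_apply])
    obtain ⟨e3, h3⟩ := U_some_of_lt h2 (j := i + 2) (by omega) (by grind [Pi.add_apply])
    rw [e1, e2, e3]
    by_cases hQ : c (i + 1) < c i
    · rw [if_pos ⟨hP, hQ⟩]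
      exact (U_some_of_lt h3 (j := i + 1) (by omega) (by grind [Pi.add_apply])).1
    · rw [if_neg (fun h => hQ h.2), U_some_of_le (j := i + 1) (by omega) (by grind [Pi.add_apply])]
  · rw [if_neg (fun h => hP h.1), U_some_of_le (by omega) (by omega)]
    rfl

lemma U_succ_U_add_two_U_U_succ_some (hc : IsPartition c) (hi : 1 ≤ i) :
    U (i + 1) (U (i + 2) (U i (U (i + 1) (some c)))) =
      if (i = 1 ∨ c i < c (i - 1)) ∧ c (i + 1) < c i then
        some (c + Pi.single i 1 + Pi.single (i + 1) 1 + Pi.single (i + 2) 1 + Pi.single (i + 1) 1)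
      else none := by
  have hci' : c (i + 2) ≤ c (i + 1) := hc.1 (i + 1) (by omega)
  by_cases hQ : c (i + 1) < c i
  · obtain ⟨e1, h1⟩ := U_some_of_lt hc (j := i + 1) (by omega) (by grind)
    rw [e1]
    by_cases hP : i = 1 ∨ c i < c (i - 1)
    · obtain ⟨e2, h2⟩ := U_some_of_lt h1 hi (by grind [Pi.add_apply])
      obtain ⟨e3, h3⟩ := U_some_of_lt h2 (j := i + 2) (by omega) (by grind [Pi.add_apply])
      obtain ⟨e4, -⟩ := U_some_of_lt h3 (j := i + 1) (by omega) (by grind [Pi.add_apply])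
      rw [e2, e3, e4, if_pos ⟨hP, hQ⟩, add_right_comm c]
    · rw [if_neg (fun h => hP h.1), U_some_of_le (by omega) (by grind [Pi.add_apply])]
      rfl
  · rw [if_neg (fun h => hQ h.2), U_some_of_le (j := i + 1) (by omega) (by grind)]
    rfl

end

theorem degree_four_relation (i : ℕ) (hi : 1 ≤ i) (c : ℕ → ℕ) (hc : IsPartition c) :
    U (i + 1) (U (i + 2) (U (i + 1) (U i (some c)))) =
    U (i + 1) (U (i + 2) (U i (U (i + 1) (some c)))) := by
  rw [U_succ_U_add_two_U_succ_U_some hc hi, U_succ_U_add_two_U_U_succ_some hc hi]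
end

section
/- Fix t ∈ N with t > 1, and let x be a word in the two-letter alphabet {t, t̄}. Define the standard representative [x] = t^{w_t(x)+α_t(x)} t̄^{α_{t-1}(x)+α_t(x)} t^{α_{t-1}(x)}. Then all three exponents are nonnegative integers, and u_x and u_{[x]} act identically on all partitions. -/
def mfold (f : List Γ → ℤ) (x : List Γ) : ℤ := (x.tails.map f).foldr max 0

lemma mfold_cons (f : List Γ → ℤ) (l : Γ) (x : List Γ) :
    mfold f (l :: x) = max (f (l :: x)) (mfold f x) := by
  simp [mfold, List.tails_cons]

lemma mfold_nil (f : List Γ → ℤ) : mfold f [] = max (f []) 0 := by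
  simp [mfold]

lemma le_mfold (f : List Γ → ℤ) {x s : List Γ} (h : s ∈ x.tails) : f s ≤ mfold f x := by
  induction x with
  | nil => simp at h; subst h; rw [mfold_nil]; exact le_max_left _ _
  | cons l x ih =>
    rw [mfold_cons]
    rw [List.tails_cons, List.mem_cons] at h
    rcases h with h | h
    · subst h; exact le_max_left _ _
    · exact le_trans (ih h) (le_max_right _ _)

lemma mfold_nonneg (f : List Γ → ℤ) (x : List Γ) : 0 ≤ mfold f x := by
  induction x with
  | nil => rw [mfold_nil]; exact le_max_right _ _
  | cons l x ih => rw [mfold_cons]; exact le_trans ih (le_max_right _ _)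

lemma wt_nil (j : ℕ) : wt j [] = 0 := by simp [wt]

lemma wt_cons_up (t : ℕ) (x : List Γ) : wt t (((false,t):Γ) :: x) = wt t x + 1 := by
  simp [wt, List.count_cons]; ring

lemma wt_cons_down (t : ℕ) (x : List Γ) : wt t (((true,t):Γ) :: x) = wt t x - 1 := by
  simp [wt, List.count_cons]; ring

def maxw (t : ℕ) (x : List Γ) : ℤ := mfold (wt t) x
def maxnw (t : ℕ) (x : List Γ) : ℤ := mfold (fun s => - wt t s) x

lemma self_mem_tails (x : List Γ) : x ∈ x.tails := (List.mem_tails _ _).2 List.suffix_rfl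

lemma wt_le_maxw (t : ℕ) (x : List Γ) : wt t x ≤ maxw t x := le_mfold _ (self_mem_tails x)
lemma neg_wt_le_maxnw (t : ℕ) (x : List Γ) : - wt t x ≤ maxnw t x := le_mfold _ (self_mem_tails x)

lemma maxw_nil (t : ℕ) : maxw t [] = 0 := by rw [maxw, mfold_nil, wt_nil]; simp
lemma maxnw_nil (t : ℕ) : maxnw t [] = 0 := by rw [maxnw, mfold_nil]; simp [wt_nil]

lemma maxw_cons (t : ℕ) (l : Γ) (x : List Γ) :
    maxw t (l :: x) = max (wt t (l :: x)) (maxw t x) := mfold_cons _ _ _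
lemma maxnw_cons (t : ℕ) (l : Γ) (x : List Γ) :
    maxnw t (l :: x) = max (- wt t (l :: x)) (maxnw t x) := mfold_cons _ _ _

lemma isPartition_update_iff_s12 {t : ℕ} (ht : 2 ≤ t) {c : ℕ → ℕ} (hc : IsPartition c) (n : ℕ) :
    IsPartition (Function.update c t n) ↔ c (t+1) ≤ n ∧ n ≤ c (t-1) := by
  obtain ⟨hmono, h0, N, hN⟩ := hc
  constructor
  · rintro ⟨hm, -, -⟩
    have hA := hm t (by omega)
    have hB := hm (t-1) (by omega)
    rw [Function.update_self, Function.update_of_ne (by omega : t+1 ≠ t)] at hA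
    rw [show t-1+1 = t from by omega, Function.update_self,
        Function.update_of_ne (by omega : t-1 ≠ t)] at hB
    exact ⟨hA, hB⟩
  · rintro ⟨h1, h2⟩
    refine ⟨?_, ?_, ⟨max N (t+1), fun i hi => ?_⟩⟩
    · intro i hi
      rcases eq_or_ne (i+1) t with h | h
      · have hit : i = t - 1 := by omega
        subst i
        rw [h, Function.update_self, Function.update_of_ne (by omega : t-1 ≠ t)]
        exact h2
      · rcases eq_or_ne i t with h' | h'
        · subst h'
          rw [Function.update_of_ne h, Function.update_self]
          exact h1
        · rw [Function.update_of_ne h, Function.update_of_ne h']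
          exact hmono i hi
    · rw [Function.update_of_ne (by omega : (0:ℕ) ≠ t)]; exact h0
    · rw [Function.update_of_ne (by omega : i ≠ t)]
      exact hN i (by omega)

open scoped Classical in
lemma act_char {t : ℕ} (ht : 2 ≤ t) (x : List Γ) (hx : ∀ l ∈ x, l.2 = t)
    {c : ℕ → ℕ} (hc : IsPartition c) :
    act x (some c) =
      if maxw t x ≤ (c (t-1) : ℤ) - c t ∧ maxnw t x ≤ (c t : ℤ) - c (t+1)
      then some (Function.update c t ((c t : ℤ) + wt t x).toNat) else none := by
  have hkv : c (t+1) ≤ c t := hc.1 t (by omega)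
  have hvm : c t ≤ c (t-1) := by
    have := hc.1 (t-1) (by omega); rwa [show t-1+1 = t from by omega] at this
  induction x with
  | nil =>
    rw [if_pos]
    · show some c = _
      rw [wt_nil, add_zero, Int.toNat_natCast, Function.update_eq_self]
    · rw [maxw_nil, maxnw_nil]
      constructor <;> [skip; skip] <;> push_cast <;> omega
  | cons l x ih =>
    obtain ⟨b, i⟩ := l
    have hit : i = t := hx (b, i) List.mem_cons_self
    subst i
    have hx' : ∀ l ∈ x, l.2 = t := fun l hl => hx l (List.mem_cons_of_mem _ hl)
    have hih := ih hx'
    by_cases hCx : maxw t x ≤ (c (t-1) : ℤ) - c t ∧ maxnw t x ≤ (c t : ℤ) - c (t+1)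
    case neg =>
      rw [if_neg hCx] at hih
      have hC' : ¬ (maxw t ((b,t)::x) ≤ (c (t-1) : ℤ) - c t ∧
          maxnw t ((b,t)::x) ≤ (c t : ℤ) - c (t+1)) := by
        intro h
        apply hCx
        have h1 : maxw t x ≤ maxw t ((b,t)::x) := by rw [maxw_cons]; exact le_max_right _ _
        have h2 : maxnw t x ≤ maxnw t ((b,t)::x) := by rw [maxnw_cons]; exact le_max_right _ _
        exact ⟨le_trans h1 h.1, le_trans h2 h.2⟩
      rw [if_neg hC']
      cases b
      · show U t (act x (some c)) = none
        rw [hih]; rfl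
      · show D t (act x (some c)) = none
        rw [hih]; rfl
    case pos =>
      rw [if_pos hCx] at hih
      have hwle : wt t x ≤ maxw t x := wt_le_maxw t x
      have hnwle : - wt t x ≤ maxnw t x := neg_wt_le_maxnw t x
      have hn0 : (0:ℤ) ≤ (c t : ℤ) + wt t x := by
        have h0 : (0:ℤ) ≤ (c (t+1) : ℤ) := by positivity
        have := hCx.2
        omega
      obtain ⟨N, hN⟩ : ∃ N : ℕ, ((c t : ℤ) + wt t x) = (N : ℤ) :=
        ⟨_, (Int.toNat_of_nonneg hn0).symm⟩
      rw [hN, Int.toNat_natCast] at hih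
      have hkN : (c (t+1) : ℤ) ≤ (N : ℤ) := by have := hCx.2; omega
      have hNm : (N : ℤ) ≤ (c (t-1) : ℤ) := by have := hCx.1; omega
      cases b
      case false =>
        show U t (act x (some c)) = _
        rw [hih]
        show upFun t (Function.update c t N) = _
        rw [upFun, Function.update_self, Function.update_idem]
        by_cases hup : N + 1 ≤ c (t-1)
        · rw [if_pos ⟨by omega, (isPartition_update_iff_s12 ht hc _).2 ⟨by omega, hup⟩⟩,
            if_pos ?_]
          · rw [wt_cons_up, show (c t : ℤ) + (wt t x + 1) = ((N+1 : ℕ) : ℤ) from by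
              push_cast; omega, Int.toNat_natCast]
          · refine ⟨?_, ?_⟩
            · rw [maxw_cons, wt_cons_up, max_le_iff]
              exact ⟨by omega, hCx.1⟩
            · rw [maxnw_cons, wt_cons_up, max_le_iff]
              exact ⟨by omega, hCx.2⟩
        · rw [if_neg ?_, if_neg ?_]
          · intro h
            have := h.1
            rw [maxw_cons, wt_cons_up, max_le_iff] at this
            omega
          · rintro ⟨-, hp⟩
            have := ((isPartition_update_iff_s12 ht hc _).1 hp).2
            omega
      case true =>
        show D t (act x (some c)) = _
        rw [hih]
        show downFun t (Function.update c t N) = _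
        rw [downFun, Function.update_self, Function.update_idem]
        by_cases hdn : c (t+1) + 1 ≤ N
        · rw [if_pos ⟨by omega, by omega,
            (isPartition_update_iff_s12 ht hc _).2 ⟨by omega, by omega⟩⟩, if_pos ?_]
          · rw [wt_cons_down, show (c t : ℤ) + (wt t x - 1) = ((N-1 : ℕ) : ℤ) from by
              push_cast [Nat.cast_sub (by omega : 1 ≤ N)]; omega, Int.toNat_natCast]
          · refine ⟨?_, ?_⟩
            · rw [maxw_cons, wt_cons_down, max_le_iff]
              exact ⟨by omega, hCx.1⟩
            · rw [maxnw_cons, wt_cons_down, max_le_iff]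
              exact ⟨by omega, hCx.2⟩
        · rw [if_neg ?_, if_neg ?_]
          · intro h
            have := h.2
            rw [maxnw_cons, wt_cons_down, max_le_iff] at this
            omega
          · rintro ⟨-, h1, hp⟩
            have := ((isPartition_update_iff_s12 ht hc _).1 hp).1
            omega

lemma wt_append (j : ℕ) (x y : List Γ) : wt j (x ++ y) = wt j x + wt j y := by
  simp [wt, List.count_append]; ring

lemma wt_rep_up (t : ℕ) (n : ℕ) : wt t (List.replicate n ((false,t):Γ)) = n := by
  simp [wt, List.count_replicate]

lemma wt_rep_down (t : ℕ) (n : ℕ) : wt t (List.replicate n ((true,t):Γ)) = -n := by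
  simp [wt, List.count_replicate]

lemma maxw_rep_up (t : ℕ) (n : ℕ) (z : List Γ) :
    maxw t (List.replicate n ((false,t):Γ) ++ z) = max (wt t z + n) (maxw t z) := by
  induction n with
  | zero => simp [max_eq_right (wt_le_maxw t z)]
  | succ n ih =>
    rw [List.replicate_succ, List.cons_append, maxw_cons, ih, wt_cons_up, wt_append, wt_rep_up,
      ← max_assoc, max_eq_left (by linarith : wt t z + (n:ℤ) ≤ (n:ℤ) + wt t z + 1)]
    congr 1
    push_cast
    ring

lemma maxw_rep_down (t : ℕ) (n : ℕ) (z : List Γ) :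
    maxw t (List.replicate n ((true,t):Γ) ++ z) = maxw t z := by
  induction n with
  | zero => simp
  | succ n ih =>
    rw [List.replicate_succ, List.cons_append, maxw_cons, ih, wt_cons_down, wt_append, wt_rep_down]
    have h1 : wt t z ≤ maxw t z := wt_le_maxw t z
    rw [max_eq_right (by linarith)]

lemma maxnw_rep_down (t : ℕ) (n : ℕ) (z : List Γ) :
    maxnw t (List.replicate n ((true,t):Γ) ++ z) = max (- wt t z + n) (maxnw t z) := by
  induction n with
  | zero => simp [max_eq_right (neg_wt_le_maxnw t z)]
  | succ n ih =>
    rw [List.replicate_succ, List.cons_append, maxnw_cons, ih, wt_cons_down, wt_append, wt_rep_down,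
      ← max_assoc, max_eq_left (by linarith : - wt t z + (n:ℤ) ≤ -((-(n:ℤ)) + wt t z - 1))]
    congr 1
    push_cast
    ring

lemma maxnw_rep_up (t : ℕ) (n : ℕ) (z : List Γ) :
    maxnw t (List.replicate n ((false,t):Γ) ++ z) = maxnw t z := by
  induction n with
  | zero => simp
  | succ n ih =>
    rw [List.replicate_succ, List.cons_append, maxnw_cons, ih, wt_cons_up, wt_append, wt_rep_up]
    have h1 : - wt t z ≤ maxnw t z := neg_wt_le_maxnw t z
    rw [max_eq_right (by linarith)]


lemma mfold_congr {f g : List Γ → ℤ} {x : List Γ} (h : ∀ s ∈ x.tails, f s = g s) :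
    mfold f x = mfold g x := by
  unfold mfold
  congr 1
  exact List.map_congr_left h

lemma wt_eq_zero {t j : ℕ} (hj : j ≠ t) {x : List Γ} (hx : ∀ l ∈ x, l.2 = t) : wt j x = 0 := by
  have h1 : x.count ((false,j):Γ) = 0 := by
    rw [List.count_eq_zero]; intro h; exact hj (hx _ h)
  have h2 : x.count ((true,j):Γ) = 0 := by
    rw [List.count_eq_zero]; intro h; exact hj (hx _ h)
  simp [wt, h1, h2]

lemma alphaV_low {t : ℕ} (ht : 2 ≤ t) {x : List Γ} (hx : ∀ l ∈ x, l.2 = t) :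
    alphaV (t-1) x = maxw t x := by
  show mfold _ x = mfold _ x
  apply mfold_congr
  intro s hs
  have hxs : ∀ l ∈ s, l.2 = t := fun l hl => hx l (((List.mem_tails _ _).1 hs).sublist.subset hl)
  rw [show t-1+1 = t from by omega, wt_eq_zero (by omega : t-1 ≠ t) hxs, sub_zero]

lemma alphaV_high {t : ℕ} (ht : 2 ≤ t) {x : List Γ} (hx : ∀ l ∈ x, l.2 = t) :
    alphaV t x = maxnw t x := by
  show mfold _ x = mfold _ x
  apply mfold_congr
  intro s hs
  have hxs : ∀ l ∈ s, l.2 = t := fun l hl => hx l (((List.mem_tails _ _).1 hs).sublist.subset hl)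
  rw [wt_eq_zero (by omega : t+1 ≠ t) hxs, zero_sub]

theorem standard_representative (t : ℕ) (ht : 1 < t) (x : List Γ)
    (hx : ∀ l ∈ x, l.2 = t) :
    0 ≤ wt t x + alphaV t x ∧
    0 ≤ alphaV (t - 1) x + alphaV t x ∧
    0 ≤ alphaV (t - 1) x ∧
    ∀ c : ℕ → ℕ, IsPartition c →
      act x (some c) =
      act (List.replicate (wt t x + alphaV t x).toNat ((false, t) : Γ) ++
           List.replicate (alphaV (t - 1) x + alphaV t x).toNat ((true, t) : Γ) ++
           List.replicate (alphaV (t - 1) x).toNat ((false, t) : Γ)) (some c) := by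
  have ht2 : 2 ≤ t := ht
  have hA1 : alphaV (t-1) x = maxw t x := alphaV_low ht2 hx
  have hA2 : alphaV t x = maxnw t x := alphaV_high ht2 hx
  have hw : wt t x ≤ maxw t x := wt_le_maxw t x
  have hnw : - wt t x ≤ maxnw t x := neg_wt_le_maxnw t x
  have hm0 : (0:ℤ) ≤ maxw t x := mfold_nonneg _ _
  have hn0 : (0:ℤ) ≤ maxnw t x := mfold_nonneg _ _
  refine ⟨by rw [hA2]; linarith, by rw [hA1, hA2]; linarith, by rw [hA1]; exact hm0, ?_⟩
  intro c hc
  set a := (wt t x + alphaV t x).toNat with hadef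
  set bb := (alphaV (t-1) x + alphaV t x).toNat with hbdef
  set cc := (alphaV (t-1) x).toNat with hcdef
  have ha : (a:ℤ) = wt t x + maxnw t x := by
    rw [hadef, hA2]; exact Int.toNat_of_nonneg (by linarith)
  have hb : (bb:ℤ) = maxw t x + maxnw t x := by
    rw [hbdef, hA1, hA2]; exact Int.toNat_of_nonneg (by linarith)
  have hcc : (cc:ℤ) = maxw t x := by
    rw [hcdef, hA1]; exact Int.toNat_of_nonneg hm0
  have hy : ∀ l ∈ (List.replicate a ((false,t):Γ) ++ List.replicate bb ((true,t):Γ) ++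
      List.replicate cc ((false,t):Γ)), l.2 = t := by
    intro l hl
    rcases List.mem_append.1 hl with h | h
    · rcases List.mem_append.1 h with h' | h'
      · rw [List.eq_of_mem_replicate h']
      · rw [List.eq_of_mem_replicate h']
    · rw [List.eq_of_mem_replicate h]
  have hC : maxw t (List.replicate cc ((false,t):Γ)) = (cc:ℤ) := by
    rw [← List.append_nil (List.replicate cc ((false,t):Γ)), maxw_rep_up, wt_nil, maxw_nil,
      zero_add, max_eq_left (by positivity)]
  have hC2 : maxnw t (List.replicate cc ((false,t):Γ)) = 0 := by
    rw [← List.append_nil (List.replicate cc ((false,t):Γ)), maxnw_rep_up, maxnw_nil]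
  have e1 : wt t (List.replicate a ((false,t):Γ) ++ List.replicate bb ((true,t):Γ) ++
      List.replicate cc ((false,t):Γ)) = wt t x := by
    rw [wt_append, wt_append, wt_rep_up, wt_rep_down, wt_rep_up, ha, hb, hcc]
    ring
  have e2 : maxw t (List.replicate a ((false,t):Γ) ++ List.replicate bb ((true,t):Γ) ++
      List.replicate cc ((false,t):Γ)) = maxw t x := by
    rw [List.append_assoc, maxw_rep_up, maxw_rep_down, hC, wt_append, wt_rep_down, wt_rep_up,
      ha, hb, hcc]
    apply le_antisymm
    · exact max_le (by linarith) le_rfl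
    · exact le_max_right _ _
  have e3 : maxnw t (List.replicate a ((false,t):Γ) ++ List.replicate bb ((true,t):Γ) ++
      List.replicate cc ((false,t):Γ)) = maxnw t x := by
    rw [List.append_assoc, maxnw_rep_up, maxnw_rep_down, hC2, wt_rep_up,
      hb, hcc]
    apply le_antisymm
    · exact max_le (by linarith) hn0
    · exact le_max_iff.2 (Or.inl (by linarith))
  rw [act_char ht2 x hx hc, act_char ht2 _ hy hc, e1, e2, e3]
end

section
/- As operators on partitions, the operator u_n commutes with the composite u_n u_{n-1} ⋯ u_1; that is, (u_n ⋯ u_1) u_n = u_n (u_n ⋯ u_1). -/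
/-! Applying `u_1`, then `u_2`, …, then `u_n` to a partition never gives `0`: when `u_{i+1}` acts,
column `i` has just been raised and so is strictly taller than column `i + 1`. Hence the chain
adds one box to each of the columns `1, …, n`. This raises columns `n - 1` and `n` alike, so it
does not change whether `u_n` can act, and when it can, both composites add the same boxes. -/

def addToColumns (c : ℕ → ℕ) (n : ℕ) : ℕ → ℕ := fun i => if 1 ≤ i ∧ i ≤ n then c i + 1 else c i

theorem addToColumns_succ (c : ℕ → ℕ) (n : ℕ) :
    addToColumns c (n + 1) =
      Function.update (addToColumns c n) (n + 1) (addToColumns c n (n + 1) + 1) := by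
  funext i
  obtain rfl | hi := eq_or_ne i (n + 1)
  · simp [addToColumns]
  · simp only [addToColumns, Function.update_of_ne hi]
    split_ifs <;> omega

theorem addToColumns_update_succ (c : ℕ → ℕ) {n : ℕ} (hn : 1 ≤ n) :
    addToColumns (Function.update c n (c n + 1)) n =
      Function.update (addToColumns c n) n (addToColumns c n n + 1) := by
  funext i
  obtain rfl | hi := eq_or_ne i n
  · simp [addToColumns, hn]
  · simp [addToColumns, Function.update_of_ne hi]

namespace IsPartition

variable {c : ℕ → ℕ}

theorem addToColumns (hc : IsPartition c) (n : ℕ) : IsPartition (addToColumns c n) := by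
  obtain ⟨hmono, hzero, N, hN⟩ := hc
  refine ⟨fun i hi => ?_, by simp [_root_.addToColumns, hzero], max N (n + 1), fun i hi => ?_⟩
  · have := hmono i hi
    unfold _root_.addToColumns
    split_ifs <;> omega
  · have := hN i (by omega)
    unfold _root_.addToColumns
    split_ifs <;> omega

theorem update_succ_iff (hc : IsPartition c) {i : ℕ} (hi : 1 ≤ i) :
    IsPartition (Function.update c i (c i + 1)) ↔ (2 ≤ i → c i < c (i - 1)) := by
  obtain ⟨hmono, hzero, N, hN⟩ := hc
  constructor
  · intro h hi2
    have := h.1 (i - 1) (by omega)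
    rw [Nat.sub_add_cancel hi, Function.update_self,
      Function.update_of_ne (by omega : i - 1 ≠ i)] at this
    omega
  · intro h
    refine ⟨fun j hj => ?_, ?_, max N (i + 1), fun j hj => ?_⟩
    · have := hmono j hj
      rw [Function.update_apply, Function.update_apply]
      split_ifs with hj1 hj2 hj3
      · omega
      · subst hj1
        have := h (by omega)
        rw [Nat.add_sub_cancel] at this
        omega
      · subst hj3
        omega
      · omega
    · rw [Function.update_of_ne (by omega)]
      exact hzero
    · rw [Function.update_of_ne (by omega)]
      exact hN j (by omega)

end IsPartition

theorem U_some_of_isPartition {c : ℕ → ℕ} (hc : IsPartition c) (i : ℕ) :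
    U i (some c) = if 1 ≤ i ∧ (2 ≤ i → c i < c (i - 1))
      then some (Function.update c i (c i + 1)) else none := by
  simp only [U, Option.bind_some, upFun]
  by_cases hi : 1 ≤ i
  · simp only [hi, true_and, hc.update_succ_iff hi]
  · simp only [hi, false_and, if_false]

theorem act_none (x : List Γ) : act x none = none := by
  induction x with
  | nil => rfl
  | cons l x ih =>
    simp only [act, List.foldr_cons] at ih ⊢
    rw [ih]
    cases l.1 <;> rfl

theorem act_up_chain {c : ℕ → ℕ} (hc : IsPartition c) (n : ℕ) :
    act ((List.range n).reverse.map (fun k => ((false, k + 1) : Γ))) (some c) =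
      some (addToColumns c n) := by
  induction n with
  | zero =>
    show some c = _
    congr 1
    funext i
    simp only [addToColumns]
    split_ifs <;> omega
  | succ n ih =>
    rw [List.range_succ, List.reverse_append, List.reverse_singleton]
    simp only [List.map_cons, List.singleton_append, act, List.foldr_cons] at ih ⊢
    rw [ih]
    have hraised : 1 ≤ n + 1 ∧
        (2 ≤ n + 1 → addToColumns c n (n + 1) < addToColumns c n (n + 1 - 1)) := by
      have := hc.1 n
      simp only [addToColumns, Nat.add_sub_cancel]
      split_ifs <;> omega
    show U (n + 1) (some (addToColumns c n)) = _
    rw [U_some_of_isPartition (hc.addToColumns n), if_pos hraised, addToColumns_succ]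

theorem chain_commutes_with_top_general (n : ℕ) (c : ℕ → ℕ) (hc : IsPartition c) :
    act ((List.range n).reverse.map (fun k => ((false, k + 1) : Γ))) (U n (some c)) =
    U n (act ((List.range n).reverse.map (fun k => ((false, k + 1) : Γ))) (some c)) := by
  have hcond : (1 ≤ n ∧ (2 ≤ n → c n < c (n - 1))) ↔
      (1 ≤ n ∧ (2 ≤ n → addToColumns c n n < addToColumns c n (n - 1))) := by
    simp only [addToColumns]
    split_ifs <;> omega
  rw [act_up_chain hc, U_some_of_isPartition hc, U_some_of_isPartition (hc.addToColumns n)]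
  split_ifs with h h' h'
  · rw [act_up_chain ((hc.update_succ_iff h.1).2 h.2), addToColumns_update_succ c h.1]
  · exact absurd (hcond.1 h) h'
  · exact absurd (hcond.2 h') h
  · exact act_none _

theorem chain_commutes_with_top (n : ℕ) (hn : 1 ≤ n) (c : ℕ → ℕ) (hc : IsPartition c) :
    act ((List.range n).reverse.map (fun k => ((false, k + 1) : Γ))) (U n (some c)) =
    U n (act ((List.range n).reverse.map (fun k => ((false, k + 1) : Γ))) (some c)) :=
  chain_commutes_with_top_general n c hc
end
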